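/- arXiv:1807.10229 — 3 statements merged into one kernel-verified Lean document; each statement's English description precedes it below -/
import Mathlib

section
/- Let N ≥ 1 and ε_0,...,ε_N ∈ [0,1) with ε_N < 1. Define π_i = c·∏_{k=0}^{i-1} ε_k for 0 ≤ i ≤ N-1 and π_N = c·(∏_{k=0}^{N-1} ε_k)/(1-ε_N), where c > 0 is the normalization constant making ∑_{i=0}^N π_i = 1. Then π = (π_0,...,π_N) is a stationary distribution of the Markov chain with transition matrix A, i.e., π_j = ∑_{i=0}^N A(i,j)·π_i for every j. -/
/-!
The weights satisfy the flow equations `π (i+1) = ε i * π i` for `i + 1 < N` and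
`(1 - ε N) * π N = ε (N-1) * π (N-1)`, which are exactly the stationarity equations for the
columns `1, …, N`. Summing them gives `∑ i, ε i * π i = ∑_{i ≥ 1} π i`, so the mass
`∑ i, (1 - ε i) * π i` sent back to `0` is `π 0`, which is the equation for column `0`.
-/

open Finset

namespace ResetChain

def kernel (N : ℕ) (ε : ℕ → ℝ) : Fin (N + 1) → Fin (N + 1) → ℝ :=
  fun i j =>
    if j = 0 then 1 - ε (i : ℕ)
    else if (j : ℕ) = (i : ℕ) + 1 then ε (i : ℕ)
    else if i = Fin.last N ∧ j = Fin.last N then ε (i : ℕ)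
    else 0

noncomputable def weights (N : ℕ) (ε : ℕ → ℝ) (c : ℝ) : ℕ → ℝ :=
  fun i => if i < N then c * ∏ k ∈ range i, ε k
    else c * (∏ k ∈ range N, ε k) / (1 - ε N)

theorem sum_kernel_zero (N : ℕ) (ε p : ℕ → ℝ) :
    ∑ i, kernel N ε i 0 * p i = ∑ i ∈ range (N + 1), (1 - ε i) * p i := by
  simp [kernel, Fin.sum_univ_eq_sum_range (fun i => (1 - ε i) * p i)]

theorem sum_kernel_succ {M k : ℕ} (ε p : ℕ → ℝ) (hk : k < M) :
    ∑ i, kernel (M + 1) ε i ⟨k + 1, by omega⟩ * p i = ε k * p k := by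
  rw [Fintype.sum_eq_single ⟨k, by omega⟩]
  · simp [kernel, Fin.ext_iff]
  · intro i hi
    grind [kernel]

theorem sum_kernel_last (M : ℕ) (ε p : ℕ → ℝ) :
    ∑ i, kernel (M + 1) ε i (Fin.last (M + 1)) * p i
      = ε M * p M + ε (M + 1) * p (M + 1) := by
  rw [Fin.sum_univ_castSucc, Fintype.sum_eq_single (Fin.last M)]
  · simp [kernel, Fin.ext_iff]
  · intro i hi
    grind [kernel]

section Balance

variable {M : ℕ} {ε p : ℕ → ℝ}

theorem sum_mul_eq_sum_succ_of_balance
    (hflow : ∀ i < M, p (i + 1) = ε i * p i)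
    (hlast : p (M + 1) = ε M * p M + ε (M + 1) * p (M + 1)) :
    ∑ i ∈ range (M + 2), ε i * p i = ∑ i ∈ range (M + 1), p (i + 1) := by
  rw [sum_range_succ, sum_range_succ, sum_range_succ,
    sum_congr rfl fun i hi => (hflow i (mem_range.mp hi)).symm, add_assoc, ← hlast]

theorem stationary_of_balance
    (hflow : ∀ i < M, p (i + 1) = ε i * p i)
    (hlast : p (M + 1) = ε M * p M + ε (M + 1) * p (M + 1)) (j : Fin (M + 2)) :
    p j = ∑ i, kernel (M + 1) ε i j * p i := by
  rcases j with ⟨_ | k, hk⟩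
  · rw [Fin.mk_zero, sum_kernel_zero, Fin.val_zero]
    simp only [sub_mul, one_mul, sum_sub_distrib, sum_mul_eq_sum_succ_of_balance hflow hlast]
    rw [sum_range_succ' p]
    ring
  · rcases Nat.lt_or_ge k M with hkM | hkM
    · rw [sum_kernel_succ ε p hkM, hflow k hkM]
    · obtain rfl : M = k := by omega
      exact hlast.trans (sum_kernel_last M ε p).symm

end Balance

theorem weights_succ {N i : ℕ} (ε : ℕ → ℝ) (c : ℝ) (hi : i + 1 < N) :
    weights N ε c (i + 1) = ε i * weights N ε c i := by
  simp only [weights, if_pos hi, if_pos (Nat.lt_of_succ_lt hi), prod_range_succ]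
  ring

theorem weights_last {M : ℕ} {ε : ℕ → ℝ} (c : ℝ) (hε : ε (M + 1) ≠ 1) :
    weights (M + 1) ε c (M + 1)
      = ε M * weights (M + 1) ε c M + ε (M + 1) * weights (M + 1) ε c (M + 1) := by
  have : 1 - ε (M + 1) ≠ 0 := sub_ne_zero.mpr hε.symm
  simp only [weights, lt_irrefl, if_false, Nat.lt_succ_self, if_true, prod_range_succ]
  field_simp
  ring

end ResetChain

open ResetChain in
theorem stationary_distribution_of_chain_general
    (N : ℕ) (hN : 1 ≤ N) (ε : ℕ → ℝ) (hε : ∀ i ≤ N, ε i ∈ Set.Ico (0:ℝ) 1)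
    (c : ℝ)
    (A : Fin (N + 1) → Fin (N + 1) → ℝ)
    (hA : A = fun (i j : Fin (N + 1)) =>
      if j = 0 then 1 - ε (i : ℕ)
      else if (j : ℕ) = (i : ℕ) + 1 then ε (i : ℕ)
      else if i = Fin.last N ∧ j = Fin.last N then ε (i : ℕ)
      else 0)
    (π : Fin (N + 1) → ℝ)
    (hπ : π = fun (i : Fin (N + 1)) =>
      if (i : ℕ) < N then c * ∏ k ∈ Finset.range (i : ℕ), ε k
      else c * (∏ k ∈ Finset.range N, ε k) / (1 - ε N)) :
    ∀ j, π j = ∑ i, A i j * π i := by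
  obtain ⟨M, rfl⟩ := Nat.exists_eq_add_of_le' hN
  subst hA hπ
  exact stationary_of_balance (fun i hi => weights_succ (N := M + 1) ε c (by omega))
    (weights_last c (hε (M + 1) le_rfl).2.ne)

/-- The vector `π` with `π i = c·∏_{k<i} ε k` for `i < N` and
`π N = c·(∏_{k<N} ε k)/(1-ε N)`, normalized by `c > 0`, is a stationary
distribution of the chain with transition matrix `A`. -/
theorem stationary_distribution_of_chain
    (N : ℕ) (hN : 1 ≤ N) (ε : ℕ → ℝ) (hε : ∀ i ≤ N, ε i ∈ Set.Ico (0:ℝ) 1)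
    (c : ℝ) (hc : 0 < c)
    (A : Fin (N + 1) → Fin (N + 1) → ℝ)
    (hA : A = fun (i j : Fin (N + 1)) =>
      if j = 0 then 1 - ε (i : ℕ)
      else if (j : ℕ) = (i : ℕ) + 1 then ε (i : ℕ)
      else if i = Fin.last N ∧ j = Fin.last N then ε (i : ℕ)
      else 0)
    (π : Fin (N + 1) → ℝ)
    (hπ : π = fun (i : Fin (N + 1)) =>
      if (i : ℕ) < N then c * ∏ k ∈ Finset.range (i : ℕ), ε k
      else c * (∏ k ∈ Finset.range N, ε k) / (1 - ε N))
    (hnorm : ∑ i, π i = 1) :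
    ∀ j, π j = ∑ i, A i j * π i :=
  stationary_distribution_of_chain_general N hN ε hε c A hA π hπ
end

section
/- The function g(ε) = 1/(-ln(1-ε)) = -1/ln(1-ε) is convex on the interval (0, 1 - e^{-2}). -/
/-!
Writing `L = log (1 - ε)`, the function `-1 / L` has derivative `-1 / ((1 - ε) L²)` and second
derivative `-(L + 2) / ((1 - ε)² L³)`. On `(0, 1 - e⁻²)` we have `-2 < L < 0`, so the second
derivative is positive.
-/

open Real Set

lemma hasDerivAt_log_one_sub {x : ℝ} (hx : x ≠ 1) :
    HasDerivAt (fun ε : ℝ => log (1 - ε)) (-1 / (1 - x)) x := by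
  simpa using ((hasDerivAt_id x).const_sub 1).log (sub_ne_zero.mpr hx.symm)

lemma hasDerivAt_neg_one_div_log_one_sub {x : ℝ} (hx : x ≠ 1) (hL : log (1 - x) ≠ 0) :
    HasDerivAt (fun ε : ℝ => -1 / log (1 - ε)) (-1 / ((1 - x) * log (1 - x) ^ 2)) x := by
  have h1x : 1 - x ≠ 0 := sub_ne_zero.mpr hx.symm
  refine ((hasDerivAt_const x (-1 : ℝ)).div (hasDerivAt_log_one_sub hx) hL).congr_deriv ?_
  field_simp
  ring

lemma hasDerivAt_neg_one_div_one_sub_mul_log_one_sub_sq {x : ℝ} (hx : x ≠ 1)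
    (hL : log (1 - x) ≠ 0) :
    HasDerivAt (fun ε : ℝ => -1 / ((1 - ε) * log (1 - ε) ^ 2))
      (-(log (1 - x) + 2) / ((1 - x) ^ 2 * log (1 - x) ^ 3)) x := by
  have h1x : 1 - x ≠ 0 := sub_ne_zero.mpr hx.symm
  have hden : HasDerivAt (fun ε : ℝ => (1 - ε) * log (1 - ε) ^ 2)
      (-1 * log (1 - x) ^ 2 + (1 - x) * (2 * log (1 - x) ^ 1 * (-1 / (1 - x)))) x :=
    ((hasDerivAt_id' x).const_sub 1).mul ((hasDerivAt_log_one_sub hx).pow 2)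
  refine ((hasDerivAt_const x (-1 : ℝ)).div hden
    (mul_ne_zero h1x (pow_ne_zero 2 hL))).congr_deriv ?_
  field_simp
  ring

lemma log_one_sub_mem_Ioo {x : ℝ} (hx : x ∈ Ioo 0 (1 - exp (-2))) :
    log (1 - x) ∈ Ioo (-2) 0 := by
  have hlow : exp (-2) < 1 - x := by linarith [hx.2]
  have hpos : 0 < 1 - x := (exp_pos _).trans hlow
  exact ⟨(lt_log_iff_exp_lt hpos).mpr hlow, log_neg hpos (by linarith [hx.1])⟩

/-- The function `g(ε) = -1/ln(1-ε)` is convex on `(0, 1 - e⁻²)`. -/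
theorem inv_neg_log_convex :
    ConvexOn ℝ (Set.Ioo (0:ℝ) (1 - Real.exp (-2)))
      (fun ε : ℝ => -1 / Real.log (1 - ε)) := by
  have hx1 : ∀ x ∈ Ioo (0:ℝ) (1 - exp (-2)), x ≠ 1 := fun x hx =>
    (hx.2.trans (sub_lt_self 1 (exp_pos _))).ne
  have hL : ∀ x ∈ Ioo (0:ℝ) (1 - exp (-2)), log (1 - x) ≠ 0 := fun x hx =>
    (log_one_sub_mem_Ioo hx).2.ne
  have hf' := fun x hx => hasDerivAt_neg_one_div_log_one_sub (hx1 x hx) (hL x hx)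
  have hf'' := fun x hx => hasDerivAt_neg_one_div_one_sub_mul_log_one_sub_sq (hx1 x hx) (hL x hx)
  refine convexOn_of_hasDerivWithinAt2_nonneg (convex_Ioo _ _)
    (f' := fun x => -1 / ((1 - x) * log (1 - x) ^ 2))
    (f'' := fun x => -(log (1 - x) + 2) / ((1 - x) ^ 2 * log (1 - x) ^ 3))
    (fun x hx => (hf' x hx).continuousAt.continuousWithinAt) ?_ ?_ ?_ <;>
    rw [interior_Ioo]
  · exact fun x hx => (hf' x hx).hasDerivWithinAt
  · exact fun x hx => (hf'' x hx).hasDerivWithinAt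
  · intro x hx
    obtain ⟨hL2, hL0⟩ := log_one_sub_mem_Ioo hx
    exact div_nonneg_of_nonpos (by linarith)
      (mul_nonpos_of_nonneg_of_nonpos (sq_nonneg _) (Odd.pow_nonpos (by decide) hL0.le))
end

section
/- Let γ ∈ (0,1), ε_out ∈ [0, γ], R > 0, R_min ∈ (0, R], and define ε_0 = (1-ε_out)γ/(1-γ) (assuming γ(2-ε_out) < 1), π_0 = (1-ε_out)/(1+ε_0-ε_out), π_1 = ε_0/(1+ε_0-ε_out), R_0 = (R - R_min π_1)/π_0, P_0 = (2^{R_0}-1)/(-ln(1-ε_0)), and P_1 = (2^{R_min}-1)/(-ln(1-ε_out)) (with ε_out > 0). Then the allocation satisfies all constraints: R_0 π_0 + R_min π_1 = R, ε_0 π_0 + ε_out π_1 = γ, ε_1 = ε_out ≤ ε_out, and the outage probabilities induced by (P_0, R_0) and (P_1, R_min) over the unit-mean Rayleigh channel are exactly ε_0 and ε_out respectively. -/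
/-!
The chain's stationary distribution collapses to `π₀ = 1 - γ`, `π₁ = γ`, because
`1 + ε₀ - ε_out = (1 - ε_out) / (1 - γ)`; the two averages are then immediate. Each power
`P = (2^r - 1) / (-log (1 - ε))` is the inverse of the Rayleigh outage map at rate `r`,
since `exp (-(2^r - 1) / P) = 1 - ε`. The feasibility condition `γ (2 - ε_out) < 1` is exactly
`ε₀ < 1`, which keeps `log (1 - ε₀)` in range.
-/

namespace VariableRateAllocation

/-- Outage probability `P(|h|² < (2^r - 1) / P)` of a unit-mean exponential gain `|h|²`. -/
noncomputable def rayleighOutage (P r : ℝ) : ℝ := 1 - Real.exp (-((2:ℝ) ^ r - 1) / P)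

noncomputable def outagePower (ε r : ℝ) : ℝ := ((2:ℝ) ^ r - 1) / (-Real.log (1 - ε))

lemma two_rpow_sub_one_ne_zero {r : ℝ} (hr : r ≠ 0) : (2:ℝ) ^ r - 1 ≠ 0 := by
  rw [sub_ne_zero, ← Real.rpow_zero 2, Ne, Real.rpow_right_inj two_pos (by norm_num)]
  exact hr

lemma rayleighOutage_outagePower {ε r : ℝ} (hr : r ≠ 0) (hε : ε < 1) :
    rayleighOutage (outagePower ε r) r = ε := by
  unfold rayleighOutage outagePower
  rw [div_div_eq_mul_div, neg_mul_neg, mul_div_cancel_left₀ _ (two_rpow_sub_one_ne_zero hr),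
    Real.exp_log (by linarith)]
  ring

section StationaryDistribution

variable {γ εout ε0 : ℝ}

lemma one_add_sub_eq_div (hγ : γ ≠ 1) (hε0 : ε0 = (1 - εout) * γ / (1 - γ)) :
    1 + ε0 - εout = (1 - εout) / (1 - γ) := by
  have : 1 - γ ≠ 0 := sub_ne_zero.2 hγ.symm
  rw [hε0]
  field_simp
  ring

lemma stationary_fst_eq (hγ : γ ≠ 1) (hεout : εout ≠ 1)
    (hε0 : ε0 = (1 - εout) * γ / (1 - γ)) :
    (1 - εout) / (1 + ε0 - εout) = 1 - γ := by
  rw [one_add_sub_eq_div hγ hε0, div_div_cancel₀ (sub_ne_zero.2 hεout.symm)]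

lemma stationary_snd_eq (hγ : γ ≠ 1) (hεout : εout ≠ 1)
    (hε0 : ε0 = (1 - εout) * γ / (1 - γ)) :
    ε0 / (1 + ε0 - εout) = γ := by
  have : 1 - γ ≠ 0 := sub_ne_zero.2 hγ.symm
  have : 1 - εout ≠ 0 := sub_ne_zero.2 hεout.symm
  rw [one_add_sub_eq_div hγ hε0, hε0]
  field_simp

end StationaryDistribution

end VariableRateAllocation

open VariableRateAllocation in
theorem closed_form_allocation_feasible_general
    (γ εout R Rmin : ℝ)
    (hγ : γ ∈ Set.Ioo (0:ℝ) 1) (hout : εout ≤ γ)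
    (hfeas : γ * (2 - εout) < 1)
    (hRmin : 0 < Rmin) (hRminR : Rmin ≤ R)
    (ε0 π0 π1 R0 P0 P1 : ℝ)
    (hε0 : ε0 = (1 - εout) * γ / (1 - γ))
    (hπ0 : π0 = (1 - εout) / (1 + ε0 - εout))
    (hπ1 : π1 = ε0 / (1 + ε0 - εout))
    (hR0 : R0 = (R - Rmin * π1) / π0)
    (hP0 : P0 = ((2:ℝ) ^ R0 - 1) / (-Real.log (1 - ε0)))
    (hP1 : P1 = ((2:ℝ) ^ Rmin - 1) / (-Real.log (1 - εout))) :
    R0 * π0 + Rmin * π1 = R ∧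
    ε0 * π0 + εout * π1 = γ ∧
    εout ≤ εout ∧
    1 - Real.exp (-((2:ℝ) ^ R0 - 1) / P0) = ε0 ∧
    1 - Real.exp (-((2:ℝ) ^ Rmin - 1) / P1) = εout := by
  obtain ⟨-, hγ1⟩ := hγ
  have hεout1 : εout < 1 := hout.trans_lt hγ1
  rw [stationary_fst_eq hγ1.ne hεout1.ne hε0] at hπ0
  rw [stationary_snd_eq hγ1.ne hεout1.ne hε0] at hπ1
  subst hπ0 hπ1 hP0 hP1
  have hε0lt : ε0 < 1 := by
    rw [hε0, div_lt_one (by linarith)]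
    linarith
  have hR0ne : R0 ≠ 0 := by
    rw [hR0]
    exact div_ne_zero (by nlinarith) (by linarith)
  refine ⟨?_, ?_, le_rfl, rayleighOutage_outagePower hR0ne hε0lt,
    rayleighOutage_outagePower hRmin.ne' hεout1⟩
  · rw [hR0, div_mul_cancel₀ _ (by linarith)]
    ring
  · rw [hε0, div_mul_cancel₀ _ (by linarith)]
    ring

/-- The closed-form `N = 1` variable-rate allocation satisfies all constraints:
average rate met with equality, average drop rate equal to `γ`, state-1 outage
at most `ε_out`, and the powers `(P₀, P₁)` induce outages exactly `ε₀, ε_out`. -/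
theorem closed_form_allocation_feasible
    (γ εout R Rmin : ℝ)
    (hγ : γ ∈ Set.Ioo (0:ℝ) 1) (houtpos : 0 < εout) (hout : εout ≤ γ)
    (hfeas : γ * (2 - εout) < 1)
    (hR : 0 < R) (hRmin : 0 < Rmin) (hRminR : Rmin ≤ R)
    (ε0 π0 π1 R0 P0 P1 : ℝ)
    (hε0 : ε0 = (1 - εout) * γ / (1 - γ))
    (hπ0 : π0 = (1 - εout) / (1 + ε0 - εout))
    (hπ1 : π1 = ε0 / (1 + ε0 - εout))
    (hR0 : R0 = (R - Rmin * π1) / π0)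
    (hP0 : P0 = ((2:ℝ) ^ R0 - 1) / (-Real.log (1 - ε0)))
    (hP1 : P1 = ((2:ℝ) ^ Rmin - 1) / (-Real.log (1 - εout))) :
    R0 * π0 + Rmin * π1 = R ∧
    ε0 * π0 + εout * π1 = γ ∧
    εout ≤ εout ∧
    1 - Real.exp (-((2:ℝ) ^ R0 - 1) / P0) = ε0 ∧
    1 - Real.exp (-((2:ℝ) ^ Rmin - 1) / P1) = εout :=
  closed_form_allocation_feasible_general γ εout R Rmin hγ hout hfeas hRmin hRminR ε0 π0 π1 R0 P0 P1
    hε0 hπ0 hπ1 hR0 hP0 hP1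
end
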